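/- arXiv:1509.04998 — 3 statements merged into one kernel-verified Lean document; each statement's English description precedes it below -/
import Mathlib

section
/- Let n be a positive integer, a a positive integer, and k an odd positive integer with 2^a·k ≤ n. Let g ∈ S_n be a permutation that has exactly one cycle of length 2^a·k, and all of whose other cycles have lengths not divisible by 2^a. Then g has even order and g^{|g|/2} is an involution whose support has cardinality exactly 2^a·k. -/
/-! Let `N = |g|`. The `2`-part of `N` comes from `c`: every cycle length `d` of `σ` divides `N`
but misses a factor `2` of it, so `d ∣ N / 2` and hence `σ ^ (N / 2) = 1`. Therefore
`g ^ (N / 2) = c ^ (N / 2)`, an involution, and a nontrivial power of the cycle `c` has the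
same support as `c`. -/

theorem Nat.Prime.dvd_div_of_dvd_of_pow_dvd {p a d N : ℕ} (hp : p.Prime) (hdN : d ∣ N)
    (hN : p ^ a ∣ N) (hd : ¬ p ^ a ∣ d) : d ∣ N / p := by
  obtain ⟨m, rfl⟩ := hdN
  have hpm : p ∣ m := by
    by_contra hpm
    exact hd ((((Nat.Prime.coprime_iff_not_dvd hp).2 hpm).pow_left a).dvd_of_dvd_mul_right hN)
  obtain ⟨j, rfl⟩ := hpm
  exact ⟨j, by rw [mul_left_comm, Nat.mul_div_cancel_left _ hp.pos]⟩

theorem Equiv.Perm.orderOf_dvd_div_of_forall_not_pow_dvd {α : Type*} [Fintype α]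
    [DecidableEq α] {σ : Equiv.Perm α} {p a N : ℕ} (hp : p.Prime) (hσN : orderOf σ ∣ N)
    (hN : p ^ a ∣ N) (hσ : ∀ d ∈ σ.cycleType, ¬ p ^ a ∣ d) : orderOf σ ∣ N / p := by
  rw [← Equiv.Perm.lcm_cycleType]
  exact Multiset.lcm_dvd.2 fun d hd =>
    hp.dvd_div_of_dvd_of_pow_dvd ((Equiv.Perm.dvd_of_mem_cycleType hd).trans hσN) hN (hσ d hd)

theorem stmt2_general (n a k : ℕ) (ha : 0 < a)
    (g c σ : Equiv.Perm (Fin n))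
    (hg : g = c * σ) (hdisj : c.Disjoint σ) (hc : c.IsCycle)
    (hclen : c.support.card = 2 ^ a * k)
    (hσ : ∀ d ∈ σ.cycleType, ¬ 2 ^ a ∣ d) :
    Even (orderOf g) ∧ orderOf (g ^ (orderOf g / 2)) = 2 ∧
      (g ^ (orderOf g / 2)).support.card = 2 ^ a * k := by
  have hN : orderOf g = Nat.lcm (orderOf c) (orderOf σ) := hg ▸ hdisj.orderOf
  have hpow : 2 ^ a ∣ orderOf g :=
    (hc.orderOf ▸ hclen ▸ dvd_mul_right _ _ : 2 ^ a ∣ orderOf c).trans (hN ▸ Nat.dvd_lcm_left _ _)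
  have htwo : 2 ∣ orderOf g := (dvd_pow_self 2 ha.ne').trans hpow
  have hinv : orderOf (g ^ (orderOf g / 2)) = 2 := orderOf_pow_orderOf_div (orderOf_pos g).ne' htwo
  set m := orderOf g / 2
  have hσ_half : σ ^ m = 1 := orderOf_dvd_iff_pow_eq_one.1 <|
    Equiv.Perm.orderOf_dvd_div_of_forall_not_pow_dvd Nat.prime_two
      (hN ▸ Nat.dvd_lcm_right _ _) hpow hσ
  have hgc : g ^ m = c ^ m := by
    rw [hg, hdisj.commute.mul_pow, hσ_half, mul_one]
  have hc_half : ¬ orderOf c ∣ m := by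
    rw [orderOf_dvd_iff_pow_eq_one, ← hgc]
    intro h
    simp [h] at hinv
  refine ⟨even_iff_two_dvd.2 htwo, hinv, ?_⟩
  rw [hgc, hc.support_pow_eq_iff.2 hc_half, hclen]

theorem stmt2 (n a k : ℕ) (hn : 0 < n) (ha : 0 < a) (hk : Odd k)
    (hle : 2 ^ a * k ≤ n) (g c σ : Equiv.Perm (Fin n))
    (hg : g = c * σ) (hdisj : c.Disjoint σ) (hc : c.IsCycle)
    (hclen : c.support.card = 2 ^ a * k)
    (hσ : ∀ d ∈ σ.cycleType, ¬ 2 ^ a ∣ d) :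
    Even (orderOf g) ∧ orderOf (g ^ (orderOf g / 2)) = 2 ∧
      (g ^ (orderOf g / 2)).support.card = 2 ^ a * k :=
  stmt2_general n a k ha g c σ hg hdisj hc hclen hσ
end

section
/- Let n be a positive integer, a a positive integer, and k an odd positive integer with 2^a·k ≤ n. Let g ∈ S_n be a permutation that has exactly one cycle of length 2^a·k, all of whose other cycles have lengths not divisible by 2^a, and such that the product of those other cycles is an odd permutation. Then g lies in the alternating group A_n, g has even order, and g^{|g|/2} is an involution whose support has cardinality exactly 2^a·k. -/
/-!
Let `L = 2 ^ a * k` be the length of the distinguished cycle `c` and `s` the order of the rest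
`σ`. Since no cycle length of `σ` is divisible by `2 ^ a`, neither is `s = lcm (cycleType σ)`, so
the `2`-adic valuation of `s` is smaller than that of `L`. Hence `m = |g| = lcm L s` has the
`2`-adic valuation of `L`: then `s ∣ m / 2` while `L ∤ m / 2`, so `g ^ (m / 2) = c ^ (m / 2)` kills
`σ` but is still a power of the cycle `c` with full support. Finally `c` is an even-length cycle,
hence odd, and so is `σ`, so `g` is even.
-/

open Equiv Equiv.Perm Finset

namespace Nat

theorem Prime.pow_dvd_lcm_iff {p a b c : ℕ} (hp : p.Prime) :
    p ^ a ∣ Nat.lcm b c ↔ p ^ a ∣ b ∨ p ^ a ∣ c := by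
  rcases eq_or_ne b 0 with rfl | hb
  · simp
  rcases eq_or_ne c 0 with rfl | hc
  · simp
  simp only [hp.pow_dvd_iff_le_factorization (Nat.lcm_ne_zero hb hc),
    hp.pow_dvd_iff_le_factorization hb, hp.pow_dvd_iff_le_factorization hc,
    Nat.factorization_lcm hb hc, Finsupp.sup_apply, le_sup_iff]

theorem Prime.exists_pow_dvd_of_pow_dvd_lcm {p a : ℕ} (hp : p.Prime) (ha : 0 < a)
    {M : Multiset ℕ} (h : p ^ a ∣ M.lcm) : ∃ d ∈ M, p ^ a ∣ d := by
  induction M using Multiset.induction with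
  | empty =>
    have : p ^ a = 1 := Nat.eq_one_of_dvd_one (by simpa using h)
    exact absurd this (Nat.one_lt_pow ha.ne' hp.one_lt).ne'
  | cons d M ih =>
    rw [Multiset.lcm_cons, lcm_eq_nat_lcm, hp.pow_dvd_lcm_iff] at h
    rcases h with hd | hM
    · exact ⟨d, Multiset.mem_cons_self d M, hd⟩
    · obtain ⟨e, he, hdvd⟩ := ih hM
      exact ⟨e, Multiset.mem_cons_of_mem he, hdvd⟩

section lcm

variable {p L s : ℕ}

theorem factorization_lcm_of_factorization_lt (hL : L ≠ 0) (hs : s ≠ 0)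
    (h : s.factorization p < L.factorization p) :
    (Nat.lcm L s).factorization p = L.factorization p := by
  rw [Nat.factorization_lcm hL hs, Finsupp.sup_apply, sup_of_le_left h.le]

theorem prime_dvd_lcm_of_factorization_lt (h : s.factorization p < L.factorization p) :
    p ∣ Nat.lcm L s :=
  (Nat.dvd_of_factorization_pos (by omega)).trans (Nat.dvd_lcm_left L s)

theorem dvd_lcm_div_prime_of_factorization_lt (hp : p.Prime) (hL : L ≠ 0) (hs : s ≠ 0)
    (h : s.factorization p < L.factorization p) : s ∣ Nat.lcm L s / p := by
  rw [Nat.dvd_div_iff_mul_dvd (prime_dvd_lcm_of_factorization_lt h),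
    ← Nat.factorization_le_iff_dvd (mul_ne_zero hp.ne_zero hs) (Nat.lcm_ne_zero hL hs)]
  intro q
  rw [Nat.factorization_mul hp.ne_zero hs, Finsupp.add_apply, hp.factorization,
    Finsupp.single_apply]
  split_ifs with hpq
  · subst hpq
    rw [factorization_lcm_of_factorization_lt hL hs h]
    omega
  · rw [zero_add]
    exact (Nat.factorization_le_iff_dvd hs (Nat.lcm_ne_zero hL hs)).2 (Nat.dvd_lcm_right L s) q

theorem not_dvd_lcm_div_prime_of_factorization_lt (hp : p.Prime) (hL : L ≠ 0) (hs : s ≠ 0)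
    (h : s.factorization p < L.factorization p) : ¬ L ∣ Nat.lcm L s / p := by
  rw [Nat.dvd_div_iff_mul_dvd (prime_dvd_lcm_of_factorization_lt h)]
  intro hdvd
  have := (Nat.factorization_le_iff_dvd (mul_ne_zero hp.ne_zero hL)
    (Nat.lcm_ne_zero hL hs)).2 hdvd p
  rw [Nat.factorization_mul hp.ne_zero hL, Finsupp.add_apply, hp.factorization_self,
    factorization_lcm_of_factorization_lt hL hs h] at this
  omega

end lcm

end Nat

namespace Equiv.Perm

variable {α : Type*} [Fintype α] [DecidableEq α] {p : ℕ} {c σ : Perm α}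

theorem IsCycle.prime_dvd_orderOf_mul (hc : c.IsCycle) (hcσ : c.Disjoint σ)
    (h : (orderOf σ).factorization p < (#c.support).factorization p) :
    p ∣ orderOf (c * σ) := by
  rw [hcσ.orderOf, hc.orderOf]
  exact Nat.prime_dvd_lcm_of_factorization_lt h

theorem IsCycle.support_mul_pow_orderOf_div_prime (hp : p.Prime) (hc : c.IsCycle)
    (hcσ : c.Disjoint σ) (h : (orderOf σ).factorization p < (#c.support).factorization p) :
    ((c * σ) ^ (orderOf (c * σ) / p)).support = c.support := by
  have hL : #c.support ≠ 0 := (card_pos.2 hc.nonempty_support).ne'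
  have hs : orderOf σ ≠ 0 := (orderOf_pos σ).ne'
  have hσ_pow : σ ^ (orderOf (c * σ) / p) = 1 := by
    rw [← orderOf_dvd_iff_pow_eq_one, hcσ.orderOf, hc.orderOf]
    exact Nat.dvd_lcm_div_prime_of_factorization_lt hp hL hs h
  rw [hcσ.commute.mul_pow, hσ_pow, mul_one, hc.support_pow_eq_iff, hcσ.orderOf, hc.orderOf]
  exact Nat.not_dvd_lcm_div_prime_of_factorization_lt hp hL hs h

theorem factorization_orderOf_lt_of_forall_not_pow_dvd {a : ℕ} (hp : p.Prime) (ha : 0 < a)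
    (h : ∀ d ∈ σ.cycleType, ¬ p ^ a ∣ d) : (orderOf σ).factorization p < a := by
  rw [← not_le, ← hp.pow_dvd_iff_le_factorization (orderOf_pos σ).ne', ← lcm_cycleType]
  intro hdvd
  obtain ⟨d, hd, hpd⟩ := hp.exists_pow_dvd_of_pow_dvd_lcm ha hdvd
  exact h d hd hpd

end Equiv.Perm

theorem stmt3_general (n a k : ℕ) (ha : 0 < a)
    (g c σ : Equiv.Perm (Fin n))
    (hg : g = c * σ) (hdisj : c.Disjoint σ) (hc : c.IsCycle)
    (hclen : c.support.card = 2 ^ a * k)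
    (hσ : ∀ d ∈ σ.cycleType, ¬ 2 ^ a ∣ d)
    (hsign : Equiv.Perm.sign σ = -1) :
    g ∈ alternatingGroup (Fin n) ∧ Even (orderOf g) ∧
      orderOf (g ^ (orderOf g / 2)) = 2 ∧
      (g ^ (orderOf g / 2)).support.card = 2 ^ a * k := by
  have hL_even : Even (#c.support) := hclen ▸ (Nat.even_pow.2 ⟨even_two, ha.ne'⟩).mul_right k
  have hval : (orderOf σ).factorization 2 < (#c.support).factorization 2 :=
    (factorization_orderOf_lt_of_forall_not_pow_dvd Nat.prime_two ha hσ).trans_le <|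
      (Nat.prime_two.pow_dvd_iff_le_factorization (card_pos.2 hc.nonempty_support).ne').1 <|
        hclen ▸ dvd_mul_right _ _
  have hg_even : Even (orderOf g) := hg ▸ even_iff_two_dvd.2 (hc.prime_dvd_orderOf_mul hdisj hval)
  refine ⟨?_, hg_even, orderOf_pow_orderOf_div (orderOf_pos g).ne' hg_even.two_dvd, ?_⟩
  · rw [mem_alternatingGroup, hg, map_mul, hc.sign, hL_even.neg_one_pow, hsign]
    rfl
  · rw [hg, hc.support_mul_pow_orderOf_div_prime Nat.prime_two hdisj hval, hclen]

theorem stmt3 (n a k : ℕ) (hn : 0 < n) (ha : 0 < a) (hk : Odd k)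
    (hle : 2 ^ a * k ≤ n) (g c σ : Equiv.Perm (Fin n))
    (hg : g = c * σ) (hdisj : c.Disjoint σ) (hc : c.IsCycle)
    (hclen : c.support.card = 2 ^ a * k)
    (hσ : ∀ d ∈ σ.cycleType, ¬ 2 ^ a ∣ d)
    (hsign : Equiv.Perm.sign σ = -1) :
    g ∈ alternatingGroup (Fin n) ∧ Even (orderOf g) ∧
      orderOf (g ^ (orderOf g / 2)) = 2 ∧
      (g ^ (orderOf g / 2)).support.card = 2 ^ a * k :=
  stmt3_general n a k ha g c σ hg hdisj hc hclen hσ hsign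
end

section
/- Let ε ∈ (0,1) and let n be an integer satisfying ⌈(log(n)+1)²⌉ < ⌈n^ε⌉ ≤ n − 2⌈log(n)⌉. Set K = ⌊⌈n^ε⌉/⌈log(n)⌉⌋. Then p̃(n,ε) ≥ Σ_{k odd, 1 ≤ k ≤ K} Σ_{a ≥ 2, 2^a ≤ ⌈log(n)⌉} c_{¬2^a}(n − 2^a·k)/(2^a·k). -/
/-- The proportion of elements `g` of the alternating group `Aₙ` such that `g` has even
order and `g^(|g|/2)` is an involution whose support has cardinality at most `⌈n^ε⌉`. -/
noncomputable def altPropn (n : ℕ) (ε : ℝ) : ℝ :=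
  (Nat.card {g : alternatingGroup (Fin n) //
      Even (orderOf g) ∧ orderOf (g ^ (orderOf g / 2)) = 2 ∧
      ((((g ^ (orderOf g / 2) : alternatingGroup (Fin n)) :
          Equiv.Perm (Fin n)).support.card : ℤ) ≤ ⌈(n : ℝ) ^ ε⌉)} : ℝ) /
    Nat.card (alternatingGroup (Fin n))

/-- `cNot m ℓ` is the proportion of elements of `S_ℓ ∖ A_ℓ` having no cycle of length
divisible by `m`. -/
noncomputable def cNot (m ℓ : ℕ) : ℝ :=
  (Nat.card {g : Equiv.Perm (Fin ℓ) //
      g ∉ alternatingGroup (Fin ℓ) ∧ ∀ d ∈ g.cycleType, ¬ m ∣ d} : ℝ) /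
    Nat.card {g : Equiv.Perm (Fin ℓ) // g ∉ alternatingGroup (Fin ℓ)}

/-!
Fix odd `k` and `a ≥ 2` with `2 ^ a ≤ ⌈log n⌉`, put `m = 2 ^ a * k`, and take the permutations of
`n` points with exactly one `m`-cycle whose other cycles form an odd permutation of the remaining
`n - m` points with no cycle length divisible by `2 ^ a`. Such a `g` is even. Every other cycle
length has a smaller `2`-part than `|g|`, so it divides `|g| / 2`, and `g ^ (|g| / 2)` is an
involution supported on the `m`-cycle; the hypotheses give `m ≤ ⌈n ^ ε⌉`. Since `m` is the only
cycle length of `g` divisible by `2 ^ a`, and `2 ^ a * k` determines `(a, k)`, these sets are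
disjoint. By the class-size formula for a cycle type, the `m`-cycle and the rest can be chosen
independently, which gives `|A_n| · c_{¬2^a}(n - m) / m` such permutations.
-/

open Equiv Equiv.Perm Finset
open scoped Nat

theorem Nat.dvd_div_two_of_two_pow_dvd {d o a : ℕ} (hdo : d ∣ o) (ho : 2 ^ a ∣ o)
    (hd : ¬ 2 ^ a ∣ d) : d ∣ o / 2 := by
  obtain ⟨i, d', hd', rfl⟩ :=
    exists_eq_two_pow_mul_odd (n := d) (by rintro rfl; exact hd (dvd_zero _))
  have hia : i + 1 ≤ a := by
    by_contra! h
    exact hd ((pow_dvd_pow 2 (by omega)).mul_right d')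
  have h : 2 ^ (i + 1) * d' ∣ o :=
    Nat.Coprime.mul_dvd_of_dvd_of_dvd (.pow_left _ (Nat.coprime_two_left.2 hd'))
      ((pow_dvd_pow 2 hia).trans ho) ((dvd_mul_left d' _).trans hdo)
  exact Nat.dvd_div_of_mul_dvd (by rwa [pow_succ, mul_comm _ 2, mul_assoc] at h)

theorem padicValNat_two_pow_mul_of_odd {a k : ℕ} (hk : Odd k) :
    padicValNat 2 (2 ^ a * k) = a := by
  rw [padicValNat.mul (by positivity) hk.pos.ne', padicValNat.prime_pow,
    padicValNat.eq_zero_of_not_dvd hk.not_two_dvd_nat, add_zero]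

namespace Equiv.Perm

variable {α β : Type*} [Fintype α] [DecidableEq α] [Fintype β] [DecidableEq β]

theorem card_support_pow_le_of_mem_cycleType {σ : Perm α} {m e : ℕ} (hm : m ∈ σ.cycleType)
    (he : ∀ d ∈ σ.cycleType.erase m, d ∣ e) : (σ ^ e).support.card ≤ m := by
  obtain ⟨c, τ, rfl, hcτ, hc, rfl⟩ := mem_cycleType_iff.1 hm
  have hτ : τ ^ e = 1 := by
    rw [← orderOf_dvd_iff_pow_eq_one, ← lcm_cycleType]
    refine Multiset.lcm_dvd.2 fun d hd => he d ?_
    rwa [hcτ.cycleType_mul, hc.cycleType, Multiset.singleton_add, Multiset.erase_cons_head]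
  rw [hcτ.commute.mul_pow, hτ, mul_one]
  exact card_le_card (support_pow_le c e)

theorem two_mul_card_compl_alternatingGroup [Nontrivial α] :
    2 * Nat.card {h : Perm α // h ∉ alternatingGroup α} = (Fintype.card α)! := by
  classical
  have hA := two_mul_card_alternatingGroup (α := α)
  have hcompl := Fintype.card_subtype_compl (· ∈ alternatingGroup α)
  have hle := Fintype.card_subtype_le (· ∈ alternatingGroup α)
  rw [Fintype.card_perm] at hA hcompl hle
  rw [Nat.card_eq_fintype_card, hcompl]
  omega

/- Both sides are instances of `card_of_cycleType_mul_eq`; as `m ∉ t`, the centralizer orders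
for the cycle types `m ::ₘ t` and `t` differ by the factor `m`. -/
theorem card_filter_cycleType_cons_mul {m : ℕ} {t : Multiset ℕ} (hm : 2 ≤ m) (ht : m ∉ t)
    (hα : Fintype.card α = m + Fintype.card β) :
    #{g : Perm α | g.cycleType = m ::ₘ t} * (m * (Fintype.card β)!) =
      (Fintype.card α)! * #{h : Perm β | h.cycleType = t} := by
  have hcount : ∏ x ∈ (m ::ₘ t).toFinset, ((m ::ₘ t).count x)! =
      ∏ x ∈ t.toFinset, (t.count x)! := by
    rw [Multiset.toFinset_cons, prod_insert (by simpa using ht), Multiset.count_cons_self,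
      Multiset.count_eq_zero_of_notMem ht]
    refine (one_mul _).trans (prod_congr rfl fun x hx => ?_)
    rw [Multiset.count_cons_of_ne (by rintro rfl; exact ht (Multiset.mem_toFinset.1 hx))]
  have hα' := card_of_cycleType_mul_eq α (m ::ₘ t)
  have hβ := card_of_cycleType_mul_eq β t
  rw [hcount, Multiset.sum_cons, Multiset.prod_cons, hα,
    show m + Fintype.card β - (m + t.sum) = Fintype.card β - t.sum by omega] at hα'
  have hcond : (m + t.sum ≤ m + Fintype.card β ∧ ∀ a ∈ m ::ₘ t, 2 ≤ a) ↔
      (t.sum ≤ Fintype.card β ∧ ∀ a ∈ t, 2 ≤ a) := by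
    simp [hm]
  rw [if_congr hcond rfl rfl] at hα'
  split_ifs at hα' hβ with h
  · rw [hα, ← hα', ← hβ]; ring
  · rw [(card_of_cycleType_eq_zero_iff β).2 h, mul_zero,
      (card_of_cycleType_eq_zero_iff α).2 (by rwa [Multiset.sum_cons, hα, hcond]), zero_mul]

theorem card_filter_mem_cycleType_erase_mul {m : ℕ} (T : Multiset ℕ → Prop) [DecidablePred T]
    (hT : ∀ t, T t → m ∉ t) (hm : 2 ≤ m) (hα : Fintype.card α = m + Fintype.card β) :
    #{g : Perm α | m ∈ g.cycleType ∧ T (g.cycleType.erase m)} * (m * (Fintype.card β)!) =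
      (Fintype.card α)! * #{h : Perm β | T h.cycleType} := by
  set I := ({h | T h.cycleType} : Finset (Perm β)).image cycleType
  have hI : ∀ t ∈ I, T t := by
    simp only [I, mem_image, mem_filter, mem_univ, true_and]
    rintro _ ⟨h, hh, rfl⟩
    exact hh
  have hβ : #{h : Perm β | T h.cycleType} = ∑ t ∈ I, #{h : Perm β | h.cycleType = t} := by
    rw [card_eq_sum_card_image cycleType]
    refine sum_congr rfl fun t ht => congrArg card (Finset.ext fun h => ?_)
    simp only [mem_filter, mem_univ, true_and, and_iff_right_iff_imp]
    rintro rfl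
    exact hI _ ht
  have hcardα : #{g : Perm α | m ∈ g.cycleType ∧ T (g.cycleType.erase m)} =
      ∑ t ∈ I, #{g : Perm α | g.cycleType = m ::ₘ t} := by
    rw [card_eq_sum_card_fiberwise (f := fun g => g.cycleType.erase m) (t := I)]
    · refine sum_congr rfl fun t ht => congrArg card (Finset.ext fun g => ?_)
      simp only [mem_filter, mem_univ, true_and]
      constructor
      · rintro ⟨⟨hmg, -⟩, rfl⟩
        exact (Multiset.cons_erase hmg).symm
      · intro hg
        simp [hg, hI t ht]
    · intro g hg
      simp only [coe_filter, mem_univ, true_and, Set.mem_ofPred_eq] at hg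
      obtain ⟨hmg, hTg⟩ := hg
      have hsum := congrArg Multiset.sum (Multiset.cons_erase hmg)
      rw [Multiset.sum_cons, sum_cycleType] at hsum
      obtain ⟨h, hh⟩ := (exists_with_cycleType_iff β).2
        ⟨by linarith [card_le_univ g.support, hα],
         fun a ha => two_le_of_mem_cycleType (Multiset.mem_of_mem_erase ha)⟩
      exact mem_image.2 ⟨h, by simpa [hh] using hTg, hh⟩
  rw [hcardα, hβ, sum_mul, mul_sum]
  exact sum_congr rfl fun t ht => card_filter_cycleType_cons_mul hm (hT t (hI t ht)) hα

-- `(-1) ^ (t.sum + card t)` is the sign of every permutation of cycle type `t`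
-- (`Equiv.Perm.sign_of_cycleType`).
def OddAvoiding (q : ℕ) (t : Multiset ℕ) : Prop :=
  (-1 : ℤˣ) ^ (t.sum + Multiset.card t) = -1 ∧ ∀ d ∈ t, ¬ q ∣ d

instance (q : ℕ) : DecidablePred (OddAvoiding q) :=
  fun _ => inferInstanceAs (Decidable (_ ∧ _))

theorem oddAvoiding_cycleType_iff {q : ℕ} {h : Perm α} :
    OddAvoiding q h.cycleType ↔ h ∉ alternatingGroup α ∧ ∀ d ∈ h.cycleType, ¬ q ∣ d := by
  rw [OddAvoiding, ← sign_of_cycleType, mem_alternatingGroup, ← Ne, Int.units_ne_iff_eq_neg]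

variable (α) in
def cycleWithOddAvoidingRest (q m : ℕ) : Finset (Perm α) :=
  {g | m ∈ g.cycleType ∧ OddAvoiding q (g.cycleType.erase m)}

theorem mem_cycleWithOddAvoidingRest {q m : ℕ} {g : Perm α} :
    g ∈ cycleWithOddAvoidingRest α q m ↔
      m ∈ g.cycleType ∧ OddAvoiding q (g.cycleType.erase m) := by
  simp [cycleWithOddAvoidingRest]

section cycleWithOddAvoidingRest

variable {q m : ℕ} {g : Perm α}

theorem mem_alternatingGroup_of_mem_cycleWithOddAvoidingRest
    (hg : g ∈ cycleWithOddAvoidingRest α q m) (hm : Even m) : g ∈ alternatingGroup α := by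
  obtain ⟨hmg, hsign, -⟩ := mem_cycleWithOddAvoidingRest.1 hg
  rw [mem_alternatingGroup, sign_of_cycleType, ← Multiset.cons_erase hmg, Multiset.sum_cons,
    Multiset.card_cons, show ∀ x y z : ℕ, x + y + (z + 1) = x + 1 + (y + z) by intros; ring,
    pow_add, hsign, hm.add_one.neg_one_pow, neg_one_mul, neg_neg]

theorem even_orderOf_of_mem_cycleWithOddAvoidingRest
    (hg : g ∈ cycleWithOddAvoidingRest α q m) (hm : Even m) : Even (orderOf g) :=
  even_iff_two_dvd.2 (hm.two_dvd.trans (dvd_of_mem_cycleType (mem_cycleWithOddAvoidingRest.1 hg).1))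

theorem card_support_pow_half_le {a : ℕ} (hg : g ∈ cycleWithOddAvoidingRest α (2 ^ a) m)
    (hm : 2 ^ a ∣ m) : (g ^ (orderOf g / 2)).support.card ≤ m := by
  obtain ⟨hmg, -, havoid⟩ := mem_cycleWithOddAvoidingRest.1 hg
  exact card_support_pow_le_of_mem_cycleType hmg fun d hd =>
    Nat.dvd_div_two_of_two_pow_dvd (dvd_of_mem_cycleType (Multiset.mem_of_mem_erase hd))
      (hm.trans (dvd_of_mem_cycleType hmg)) (havoid d hd)

theorem eq_of_mem_cycleWithOddAvoidingRest {m' : ℕ} (hg : g ∈ cycleWithOddAvoidingRest α q m)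
    (hm' : m' ∈ g.cycleType) (hq : q ∣ m') : m' = m := by
  by_contra hne
  exact (mem_cycleWithOddAvoidingRest.1 hg).2.2 m' ((Multiset.mem_erase_of_ne hne).2 hm') hq

theorem eq_of_mem_cycleWithOddAvoidingRest_two_pow {a a' k k' : ℕ} (hk : Odd k) (hk' : Odd k')
    (hg : g ∈ cycleWithOddAvoidingRest α (2 ^ a) (2 ^ a * k))
    (hg' : g ∈ cycleWithOddAvoidingRest α (2 ^ a') (2 ^ a' * k')) : a = a' ∧ k = k' := by
  have hm : 2 ^ a * k = 2 ^ a' * k' := by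
    rcases le_total a a' with h | h
    · exact (eq_of_mem_cycleWithOddAvoidingRest hg (mem_cycleWithOddAvoidingRest.1 hg').1
        (dvd_mul_of_dvd_left (pow_dvd_pow 2 h) _)).symm
    · exact eq_of_mem_cycleWithOddAvoidingRest hg' (mem_cycleWithOddAvoidingRest.1 hg).1
        (dvd_mul_of_dvd_left (pow_dvd_pow 2 h) _)
  obtain rfl : a = a' := by
    rw [← padicValNat_two_pow_mul_of_odd (a := a) hk,
      ← padicValNat_two_pow_mul_of_odd (a := a') hk', hm]
  exact ⟨rfl, Nat.eq_of_mul_eq_mul_left (by positivity) hm⟩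

end cycleWithOddAvoidingRest

end Equiv.Perm

theorem card_cycleWithOddAvoidingRest_div {n q m : ℕ} (hqm : q ∣ m) (hm : 2 ≤ m)
    (hmn : m + 2 ≤ n) :
    (#(cycleWithOddAvoidingRest (Fin n) q m) : ℝ) / Nat.card (alternatingGroup (Fin n)) =
      cNot q (n - m) / m := by
  have key := card_filter_mem_cycleType_erase_mul (α := Fin n) (β := Fin (n - m))
    (OddAvoiding q) (fun t ht hmt => ht.2 m hmt hqm) hm (by simp; omega)
  have hodd : #{h : Perm (Fin (n - m)) | OddAvoiding q h.cycleType} =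
      Nat.card {h : Perm (Fin (n - m)) //
        h ∉ alternatingGroup (Fin (n - m)) ∧ ∀ d ∈ h.cycleType, ¬ q ∣ d} := by
    rw [← Nat.card_eq_finsetCard]
    exact Nat.card_congr (.subtypeEquivRight fun h => by simp [oddAvoiding_cycleType_iff])
  have : Nontrivial (Fin n) := Fin.nontrivial_iff_two_le.2 (by omega)
  have : Nontrivial (Fin (n - m)) := Fin.nontrivial_iff_two_le.2 (by omega)
  have hAn := two_mul_card_alternatingGroup (α := Fin n)
  have hAl := two_mul_card_compl_alternatingGroup (α := Fin (n - m))
  rw [Fintype.card_perm, ← Nat.card_eq_fintype_card] at hAn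
  simp only [Fintype.card_fin] at key hAn hAl
  have hA0 : 0 < Nat.card (alternatingGroup (Fin n)) := Nat.card_pos
  have hl0 : 0 < Nat.card {h : Perm (Fin (n - m)) // h ∉ alternatingGroup (Fin (n - m))} := by
    have := Nat.factorial_pos (n - m); omega
  rw [cycleWithOddAvoidingRest, cNot, ← hodd, div_div,
    div_eq_div_iff (by positivity) (by positivity)]
  rw [← hAn, ← hAl] at key
  norm_cast
  linarith

theorem card_div_le_altPropn {n : ℕ} {ε : ℝ} (s : Finset (Perm (Fin n)))
    (hs : ∀ g ∈ s, g ∈ alternatingGroup (Fin n) ∧ Even (orderOf g) ∧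
      ((g ^ (orderOf g / 2)).support.card : ℤ) ≤ ⌈(n : ℝ) ^ ε⌉) :
    (#s : ℝ) / Nat.card (alternatingGroup (Fin n)) ≤ altPropn n ε := by
  refine div_le_div_of_nonneg_right ?_ (Nat.cast_nonneg _)
  rw [← Nat.card_eq_finsetCard]
  refine Nat.cast_le.2 (Nat.card_le_card_of_injective
    (fun g => ⟨⟨g, (hs g g.2).1⟩, ?_⟩) fun g g' h => ?_)
  · obtain ⟨-, heven, hsupp⟩ := hs g g.2
    rw [Subgroup.orderOf_mk]
    refine ⟨heven, ?_, hsupp⟩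
    rw [← Subgroup.orderOf_coe, SubgroupClass.coe_pow]
    exact orderOf_pow_orderOf_div (orderOf_pos _).ne' heven.two_dvd
  · exact Subtype.ext (congrArg (fun x => ((x.1 : alternatingGroup (Fin n)) : Perm (Fin n))) h)

theorem two_pow_mul_bounds {B L : ℤ} {n K a k : ℕ} (hB : B ≤ n - 2 * L) (hK : (K : ℤ) = B / L)
    (ha : a ∈ Icc 2 (Nat.log 2 L.toNat)) (hk : k ∈ Icc 1 K) :
    2 ≤ 2 ^ a * k ∧ 2 ^ a * k + 2 ≤ n ∧ ((2 ^ a * k : ℕ) : ℤ) ≤ B ∧ Even (2 ^ a * k) := by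
  obtain ⟨ha2, haL⟩ := mem_Icc.1 ha
  obtain ⟨hk1, hkK⟩ := mem_Icc.1 hk
  have hL : 2 ^ a ≤ L.toNat :=
    (Nat.pow_le_pow_right two_pos haL).trans (Nat.pow_log_le_self 2 (by
      rintro h; rw [h, Nat.log_zero_right] at haL; omega))
  have h4 : 4 ≤ 2 ^ a := by
    simpa using Nat.pow_le_pow_right two_pos ha2
  have hmB : ((2 ^ a * k : ℕ) : ℤ) ≤ B :=
    calc ((2 ^ a * k : ℕ) : ℤ) ≤ ((L.toNat * K : ℕ) : ℤ) := by gcongr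
      _ = L * K := by push_cast; rw [Int.toNat_of_nonneg (by omega)]
      _ ≤ B := by rw [hK]; exact Int.mul_ediv_self_le (by omega)
  exact ⟨by nlinarith, by omega, hmB, (Nat.even_pow.2 ⟨even_two, by omega⟩).mul_right _⟩

theorem stmt6_general (ε : ℝ) (n : ℕ)
    (h2 : ⌈(n : ℝ) ^ ε⌉ ≤ (n : ℤ) - 2 * ⌈Real.log n⌉)
    (K : ℕ) (hK : (K : ℤ) = ⌈(n : ℝ) ^ ε⌉ / ⌈Real.log n⌉) :
    altPropn n ε ≥
      ∑ k ∈ (Finset.Icc 1 K).filter (fun k => Odd k),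
        ∑ a ∈ Finset.Icc 2 (Nat.log 2 ⌈Real.log n⌉.toNat),
          cNot (2 ^ a) (n - 2 ^ a * k) / ((2 : ℝ) ^ a * k) := by
  set I := (Icc 1 K).filter Odd ×ˢ Icc 2 (Nat.log 2 ⌈Real.log n⌉.toNat)
  set S : ℕ × ℕ → Finset (Perm (Fin n)) := fun p =>
    cycleWithOddAvoidingRest (Fin n) (2 ^ p.2) (2 ^ p.2 * p.1)
  have hbounds (p : ℕ × ℕ) (hp : p ∈ I) :=
    two_pow_mul_bounds h2 hK (mem_product.1 hp).2 (mem_filter.1 (mem_product.1 hp).1).1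
  have hodd (p : ℕ × ℕ) (hp : p ∈ I) : Odd p.1 := (mem_filter.1 (mem_product.1 hp).1).2
  have hdisj : (I : Set (ℕ × ℕ)).PairwiseDisjoint S := fun p hp q hq hpq =>
    disjoint_left.2 fun g hgp hgq => hpq <| Prod.ext_iff.2 <|
      (eq_of_mem_cycleWithOddAvoidingRest_two_pow (hodd p hp) (hodd q hq) hgp hgq).symm
  calc ∑ k ∈ (Icc 1 K).filter Odd, ∑ a ∈ Icc 2 (Nat.log 2 ⌈Real.log n⌉.toNat),
        cNot (2 ^ a) (n - 2 ^ a * k) / ((2 : ℝ) ^ a * k)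
      = ∑ p ∈ I, (#(S p) : ℝ) / Nat.card (alternatingGroup (Fin n)) := by
        rw [← sum_product']
        refine sum_congr rfl fun p hp => ?_
        obtain ⟨hm, hmn, -⟩ := hbounds p hp
        rw [card_cycleWithOddAvoidingRest_div (dvd_mul_right _ _) hm hmn]
        push_cast
        rfl
    _ = (#(I.biUnion S) : ℝ) / Nat.card (alternatingGroup (Fin n)) := by
        rw [← sum_div, card_biUnion hdisj, Nat.cast_sum]
    _ ≤ altPropn n ε := card_div_le_altPropn _ fun g hg => by
        obtain ⟨p, hp, hg⟩ := mem_biUnion.1 hg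
        obtain ⟨-, -, hmB, heven⟩ := hbounds p hp
        exact ⟨mem_alternatingGroup_of_mem_cycleWithOddAvoidingRest hg heven,
          even_orderOf_of_mem_cycleWithOddAvoidingRest hg heven,
          (Nat.cast_le.2 (card_support_pow_half_le hg (dvd_mul_right _ _))).trans hmB⟩

theorem stmt6 (ε : ℝ) (hε : ε ∈ Set.Ioo (0 : ℝ) 1) (n : ℕ)
    (h1 : ⌈(Real.log n + 1) ^ 2⌉ < ⌈(n : ℝ) ^ ε⌉)
    (h2 : ⌈(n : ℝ) ^ ε⌉ ≤ (n : ℤ) - 2 * ⌈Real.log n⌉)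
    (K : ℕ) (hK : (K : ℤ) = ⌈(n : ℝ) ^ ε⌉ / ⌈Real.log n⌉) :
    altPropn n ε ≥
      ∑ k ∈ (Finset.Icc 1 K).filter (fun k => Odd k),
        ∑ a ∈ Finset.Icc 2 (Nat.log 2 ⌈Real.log n⌉.toNat),
          cNot (2 ^ a) (n - 2 ^ a * k) / ((2 : ℝ) ^ a * k) :=
  stmt6_general ε n h2 K hK
end
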